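/- If G is a connected graph with independence number α(G) = 2, then cfc(G) = 2. -/

import Mathlib

open SimpleGraph

/-- An edge coloring `c` makes `G` conflict-free connected: every two distinct
vertices are joined by a path containing a color used on exactly one of its edges. -/
def IsCFConnColoring {V : Type*} (G : SimpleGraph V) (c : Sym2 V → ℕ) : Prop :=
  ∀ u v : V, u ≠ v → ∃ p : G.Walk u v, p.IsPath ∧
    ∃ col : ℕ, (p.edges.filter (fun e => c e = col)).length = 1

/-- The conflict-free connection number: the minimum number of colors in a
conflict-free connection coloring. -/
noncomputable def cfcNum {V : Type*} (G : SimpleGraph V) : ℕ :=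
  sInf {k | ∃ c : Sym2 V → ℕ, (∀ e, c e < k) ∧ IsCFConnColoring G c}

/-- The independence number: the maximum size of a set of pairwise non-adjacent vertices. -/
noncomputable def indepNum {V : Type*} [Fintype V] (G : SimpleGraph V) : ℕ :=
  sSup {n | ∃ s : Finset V, (↑s : Set V).Pairwise (fun a b => ¬ G.Adj a b) ∧ s.card = n}

/-!
A connected graph with `α(G) = 2` is not complete, so one colour does not suffice, and it
contains an induced path `u - w - v`. Colour `wv` and every edge at `u` except `uw` with `1`, all
other edges with `0`. Since no three vertices are pairwise non-adjacent, every vertex is adjacent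
to `u` or `v`, and `w` is adjacent to one of any two non-adjacent vertices. Hence two non-adjacent
vertices are joined either by a path through `wv` whose other edges have colour `0`, or by a path
`x - u - w (- p)` with colours `1, 0 (, 0 or 1)`.
-/

namespace SimpleGraph

variable {V : Type*} {G : SimpleGraph V}

lemma exists_ne_not_adj_of_two_le_indepNum (h : 2 ≤ G.indepNum) :
    ∃ u v, u ≠ v ∧ ¬G.Adj u v := by
  obtain ⟨s, hs⟩ := G.exists_isNIndepSet_indepNum
  obtain ⟨u, hu, v, hv, huv⟩ := Finset.one_lt_card.mp (hs.card_eq ▸ h)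
  exact ⟨u, v, huv, hs.isIndepSet hu hv huv⟩

lemma indepSetFree_of_indepNum_lt [Finite V] {n : ℕ} (h : G.indepNum < n) :
    G.IndepSetFree n := fun s hs => by
  have := hs.isIndepSet.card_le_indepNum
  rw [hs.card_eq] at this
  omega

lemma IndepSetFree.adj_or_adj_of_not_adj (h : G.IndepSetFree 3) {x y z : V} (hxy : x ≠ y)
    (hnxy : ¬G.Adj x y) (hzx : z ≠ x) (hzy : z ≠ y) : G.Adj z x ∨ G.Adj z y := by
  classical
  by_contra! hz
  refine h {x, y, z} ((G.isNClique_compl).mp (is3Clique_triple_iff.mpr ?_))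
  simp only [compl_adj]
  exact ⟨⟨hxy, hnxy⟩, ⟨hzx.symm, fun h => hz.1 h.symm⟩, ⟨hzy.symm, fun h => hz.2 h.symm⟩⟩

lemma Connected.exists_adj_adj_not_adj (hG : G.Connected) {a b : V} (hab : a ≠ b)
    (hnab : ¬G.Adj a b) : ∃ u w v, G.Adj u w ∧ G.Adj w v ∧ ¬G.Adj u v ∧ u ≠ v := by
  obtain ⟨p, hp⟩ := (hG a b).exists_walk_length_eq_dist
  exact p.exists_adj_adj_not_adj_ne hp (hG.one_lt_dist_of_ne_of_not_adj hab hnab)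

end SimpleGraph

lemma indepNum_eq_indepNum {V : Type*} [Fintype V] (G : SimpleGraph V) :
    _root_.indepNum G = G.indepNum := by
  unfold _root_.indepNum SimpleGraph.indepNum
  congr! 3 with n
  exact ⟨fun ⟨s, hs, hc⟩ => ⟨s, ⟨hs, hc⟩⟩, fun ⟨s, hs⟩ => ⟨s, hs.isIndepSet, hs.card_eq⟩⟩

section CFConnected

variable {V : Type*} {G : SimpleGraph V} {c : Sym2 V → ℕ}

def CFConnected (G : SimpleGraph V) (c : Sym2 V → ℕ) (u v : V) : Prop :=
  ∃ p : G.Walk u v, p.IsPath ∧ ∃ col : ℕ, (p.edges.filter (fun e => c e = col)).length = 1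

lemma CFConnected.symm {u v : V} (h : CFConnected G c u v) : CFConnected G c v u := by
  obtain ⟨p, hp, col, hcol⟩ := h
  refine ⟨p.reverse, hp.reverse, col, ?_⟩
  rwa [Walk.edges_reverse, List.filter_reverse, List.length_reverse]

lemma cfConnected_of_adj {u v : V} (h : G.Adj u v) : CFConnected G c u v :=
  ⟨h.toWalk, by simp [h.ne], c s(u, v), by simp⟩

lemma cfConnected_of_adj_adj {p a q : V} (h₁ : G.Adj p a) (h₂ : G.Adj a q) (hpq : p ≠ q)
    (hc : c s(p, a) ≠ c s(a, q)) : CFConnected G c p q := by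
  refine ⟨.cons h₁ (.cons h₂ .nil), by simp [h₁.ne, h₂.ne, hpq], c s(p, a), ?_⟩
  simp [hc.symm]

lemma cfConnected_of_adj_adj_adj {p a b q : V} (h₁ : G.Adj p a) (h₂ : G.Adj a b)
    (h₃ : G.Adj b q) (hpb : p ≠ b) (hpq : p ≠ q) (haq : a ≠ q)
    (hc : ∃ col, [c s(p, a), c s(a, b), c s(b, q)].count col = 1) : CFConnected G c p q := by
  obtain ⟨col, hcol⟩ := hc
  refine ⟨.cons h₁ (.cons h₂ (.cons h₃ .nil)), ?_, col, ?_⟩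
  · simp [h₁.ne, h₂.ne, h₃.ne, hpb, hpq, haq]
  · rw [show [c s(p, a), c s(a, b), c s(b, q)] = [s(p, a), s(a, b), s(b, q)].map c from rfl,
      List.count, List.countP_map] at hcol
    rwa [← List.countP_eq_length_filter]

lemma cfConnected_via_edge {a b p q : V} (hab : G.Adj a b)
    (hp : p = a ∨ G.Adj p a) (hq : q = b ∨ G.Adj b q) (hpb : p ≠ b) (hqa : q ≠ a) (hpq : p ≠ q)
    (hcp : p ≠ a → c s(p, a) ≠ c s(a, b)) (hcq : q ≠ b → c s(b, q) ≠ c s(a, b)) :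
    CFConnected G c p q := by
  rcases hp with rfl | hpa <;> rcases hq with rfl | hbq
  · exact cfConnected_of_adj hab
  · exact cfConnected_of_adj_adj hab hbq hpq (hcq hbq.ne').symm
  · exact cfConnected_of_adj_adj hpa hab hpq (hcp hpa.ne)
  · refine cfConnected_of_adj_adj_adj hpa hab hbq hpb hpq hqa.symm ⟨c s(a, b), ?_⟩
    simp [hcp hpa.ne, hcq hbq.ne']

lemma adj_of_isCFConnColoring_const {k : ℕ} (h : IsCFConnColoring G (fun _ => k)) {u v : V}
    (huv : u ≠ v) : G.Adj u v := by
  obtain ⟨p, -, col, hcol⟩ := h u v huv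
  by_cases hk : k = col
  · exact p.adj_of_length_eq_one (by simpa [hk] using hcol)
  · simp [hk] at hcol

lemma cfcNum_eq_two {u v : V} (huv : u ≠ v) (hnadj : ¬G.Adj u v) (hc₂ : ∀ e, c e < 2)
    (hc : IsCFConnColoring G c) : cfcNum G = 2 := by
  have h₂ : 2 ∈ {k | ∃ c : Sym2 V → ℕ, (∀ e, c e < k) ∧ IsCFConnColoring G c} := ⟨c, hc₂, hc⟩
  obtain ⟨c', hc'lt, hc'⟩ := Nat.sInf_mem ⟨2, h₂⟩
  refine le_antisymm (Nat.sInf_le h₂) (not_lt.mp fun hlt => hnadj ?_)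
  have hc'0 : c' = fun _ => 0 := funext fun e => by
    have := hc'lt e
    unfold cfcNum at hlt
    omega
  exact adj_of_isCFConnColoring_const (hc'0 ▸ hc') huv

end CFConnected

section P3Coloring

variable {V : Type*} [DecidableEq V] {G : SimpleGraph V}

def p3Coloring (u w v : V) (e : Sym2 V) : ℕ :=
  if e = s(w, v) ∨ (u ∈ e ∧ w ∉ e) then 1 else 0

lemma p3Coloring_lt_two (u w v : V) (e : Sym2 V) : p3Coloring u w v e < 2 := by
  unfold p3Coloring
  split_ifs <;> omega

lemma cfConnected_p3Coloring_via_edge {u w v p q : V} (hwv : G.Adj w v) (huv : u ≠ v)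
    (hnuv : ¬G.Adj u v) (hp : p = w ∨ G.Adj p w) (hq : q = v ∨ G.Adj v q) (hpv : p ≠ v)
    (hqw : q ≠ w) (hpq : p ≠ q) : CFConnected G (p3Coloring u w v) p q := by
  have hqu : q ≠ u := by rintro rfl; rcases hq with rfl | h; exacts [huv rfl, hnuv h.symm]
  refine cfConnected_via_edge hwv hp hq hpv hqw hpq (fun _ => ?_) (fun _ => ?_)
  · simp [p3Coloring, hpv, hwv.ne]
  · simp [p3Coloring, hqw, huv, hqu.symm, hwv.ne.symm]

lemma cfConnected_p3Coloring_via_hub {u w v x p : V} (huw : G.Adj u w) (hwv : G.Adj w v)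
    (huv : u ≠ v) (hxu : G.Adj x u) (hxw : x ≠ w) (hp : p = w ∨ G.Adj p w) (hpu : p ≠ u)
    (hpx : p ≠ x) : CFConnected G (p3Coloring u w v) x p := by
  have hxu1 : p3Coloring u w v s(x, u) = 1 := by
    simp [p3Coloring, hxw.symm, huw.ne.symm]
  have huw0 : p3Coloring u w v s(u, w) = 0 := by
    simp [p3Coloring, huv, hwv.ne]
  rcases hp with rfl | hpw
  · exact cfConnected_of_adj_adj hxu huw hpx.symm (by rw [hxu1, huw0]; decide)
  · refine cfConnected_of_adj_adj_adj hxu huw hpw.symm hxw hpx.symm hpu.symm ?_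
    rw [hxu1, huw0]
    by_cases hpv : p = v
    · exact ⟨0, by simp [p3Coloring, hpv]⟩
    · exact ⟨1, by simp [p3Coloring, hpv, hpw.ne]⟩

theorem isCFConnColoring_p3Coloring (h₃ : G.IndepSetFree 3) {u w v : V} (huw : G.Adj u w)
    (hwv : G.Adj w v) (hnuv : ¬G.Adj u v) (huv : u ≠ v) :
    IsCFConnColoring G (p3Coloring u w v) := by
  intro p q hpq
  show CFConnected G (p3Coloring u w v) p q
  by_cases hadj : G.Adj p q
  · exact cfConnected_of_adj hadj
  wlog hp : p = w ∨ G.Adj p w generalizing p q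
  · have hq : q = w ∨ G.Adj q w := by
      by_contra! hq
      rcases h₃.adj_or_adj_of_not_adj hpq hadj (Ne.symm fun h => hp (.inl h)) hq.1.symm with
        h | h
      exacts [hp (.inr h.symm), hq.2 h.symm]
    exact (this q p hpq.symm (fun h => hadj h.symm) hq).symm
  have hqw : q ≠ w := by rintro rfl; rcases hp with rfl | h; exacts [hpq rfl, hadj h]
  by_cases hq : q = v ∨ G.Adj v q
  · have hpv : p ≠ v := by rintro rfl; rcases hq with rfl | h; exacts [hpq rfl, hadj h]
    exact cfConnected_p3Coloring_via_edge hwv huv hnuv hp hq hpv hqw hpq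
  obtain ⟨hqv, hvq⟩ := not_or.mp hq
  rcases eq_or_ne q u with rfl | hqu
  · have hpv : p = v ∨ G.Adj v p := by
      rcases eq_or_ne p v with hpv | hpv
      · exact .inl hpv
      · exact .inr ((h₃.adj_or_adj_of_not_adj huv hnuv hpq hpv).resolve_left hadj).symm
    have hpw : p ≠ w := by rintro rfl; exact hadj huw.symm
    exact (cfConnected_p3Coloring_via_edge hwv huv hnuv (.inr huw) hpv huv hpw
      hpq.symm).symm
  · have hqu' : G.Adj q u :=
      (h₃.adj_or_adj_of_not_adj huv hnuv hqu hqv).resolve_right fun h => hvq h.symm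
    have hpu : p ≠ u := by rintro rfl; exact hadj hqu'.symm
    exact (cfConnected_p3Coloring_via_hub huw hwv huv hqu' hqw hp hpu hpq).symm

end P3Coloring

theorem stmt3 {V : Type*} [Fintype V] (G : SimpleGraph V) (hG : G.Connected)
    (h : _root_.indepNum G = 2) : cfcNum G = 2 := by
  classical
  rw [indepNum_eq_indepNum] at h
  obtain ⟨a, b, hab, hnab⟩ := exists_ne_not_adj_of_two_le_indepNum h.ge
  obtain ⟨u, w, v, huw, hwv, hnuv, huv⟩ := hG.exists_adj_adj_not_adj hab hnab
  have h₃ : G.IndepSetFree 3 := indepSetFree_of_indepNum_lt (by omega)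
  exact cfcNum_eq_two huv hnuv (p3Coloring_lt_two u w v)
    (isCFConnColoring_p3Coloring h₃ huw hwv hnuv huv)
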